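/- For n ≥ 2, the real subspace of sl(n+1,ℂ) consisting of matrices X with zero first row and first column except the (1,1) entry a₀, whose lower-right n×n block has zero entries in its first row off the diagonal and zero entries in its last column off the diagonal (with diagonal entries a₁,...,aₙ), satisfying the complex relation a₀+a₁+⋯+aₙ = 0 and the mixed real-complex relation 2 Re(a₀ - a₁) = a₁ - aₙ (in particular a₁ - aₙ is real), has real dimension 2(n² - 2n + 2). -/
import Mathlib

open Matrix Module

namespace SubmaxCProj6

noncomputable def a1v (c d : ℂ) : ℂ :=
  (((c-d).re/4 : ℝ) : ℂ) + (((c-d).im/2 : ℝ) : ℂ) * Complex.I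

noncomputable def Phi (n : ℕ) : Matrix (Fin (n+1)) (Fin (n+1)) ℂ →ₗ[ℝ]
    (ℂ × ℂ × (Fin n → ℂ) × (Fin n → ℂ) × (Fin (n-1) → ℂ) × (Fin (n-2) → ℂ)) where
  toFun X := (Matrix.trace X,
    ((2*((X 0 0).re - (X 1 1).re) : ℝ) : ℂ) - (X 1 1 - X (Fin.last n) (Fin.last n)),
    fun j => X 0 j.succ,
    fun j => X j.succ 0,
    fun j => X 1 ⟨(j:ℕ)+2, by have := j.isLt; omega⟩,
    fun i => X ⟨(i:ℕ)+2, by have := i.isLt; omega⟩ (Fin.last n))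
  map_add' X Y := by
    refine Prod.ext ?_ (Prod.ext ?_ (Prod.ext ?_ (Prod.ext ?_ (Prod.ext ?_ ?_)))) <;>
      first
      | (funext k; simp [Matrix.add_apply])
      | (simp [Matrix.trace_add, Matrix.add_apply, Complex.add_re]; push_cast <;> try ring)
      | (simp [Matrix.trace_add, Matrix.add_apply, Complex.add_re])
  map_smul' r X := by
    refine Prod.ext ?_ (Prod.ext ?_ (Prod.ext ?_ (Prod.ext ?_ (Prod.ext ?_ ?_)))) <;>
      first
      | (funext k; simp [Matrix.smul_apply, Complex.real_smul])
      | (simp [Matrix.smul_apply, Complex.real_smul, Complex.ofReal_mul]; push_cast <;> try ring)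
      | (simp [Matrix.smul_apply, Complex.real_smul, Complex.ofReal_mul])

lemma val_one (n : ℕ) (hn : 2 ≤ n) : ((1 : Fin (n+1)) : ℕ) = 1 := by
  rw [Fin.val_one']; exact Nat.mod_eq_of_lt (by omega)

lemma mem_ker_iff (n : ℕ) (hn : 2 ≤ n) (X : Matrix (Fin (n+1)) (Fin (n+1)) ℂ) :
    X ∈ LinearMap.ker (SubmaxCProj6.Phi n) ↔
      (Matrix.trace X = 0 ∧
       (∀ j : Fin (n+1), j ≠ 0 → X 0 j = 0 ∧ X j 0 = 0) ∧
       (∀ j : Fin (n+1), 2 ≤ (j:ℕ) → X 1 j = 0) ∧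
       (∀ i : Fin (n+1), 1 ≤ (i:ℕ) → (i:ℕ) ≤ n - 1 → X i (Fin.last n) = 0) ∧
       ((2*((X 0 0).re - (X 1 1).re) : ℝ) : ℂ)
          = X 1 1 - X (Fin.last n) (Fin.last n)) := by
  rw [LinearMap.mem_ker]
  simp only [Phi, LinearMap.coe_mk, AddHom.coe_mk, Prod.mk_eq_zero, funext_iff,
    Pi.zero_apply, sub_eq_zero]
  constructor
  · rintro ⟨h1, h2, h3, h4, h5, h6⟩
    refine ⟨h1, ?_, ?_, ?_, h2⟩
    · intro j hj
      have := h3 (j.pred hj)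
      have := h4 (j.pred hj)
      simp only [Fin.succ_pred] at *
      exact ⟨by assumption, by assumption⟩
    · intro j hj
      have hk : (j : ℕ) - 2 < n - 1 := by have := j.isLt; omega
      have := h5 ⟨(j:ℕ) - 2, hk⟩
      have hj' : (⟨(j:ℕ) - 2 + 2, by have := j.isLt; omega⟩ : Fin (n+1)) = j := by
        apply Fin.ext; simp; omega
      rwa [hj'] at this
    · intro i hi1 hi2
      rcases eq_or_lt_of_le hi1 with h | h
      · have hi : i = 1 := by apply Fin.ext; rw [val_one n hn]; omega
        subst hi
        have hk : n - 2 < n - 1 := by omega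
        have := h5 ⟨n - 2, hk⟩
        have hl : (⟨n - 2 + 2, by omega⟩ : Fin (n+1)) = Fin.last n := by
          apply Fin.ext; simp; omega
        rwa [hl] at this
      · have hk : (i : ℕ) - 2 < n - 2 := by omega
        have := h6 ⟨(i:ℕ) - 2, hk⟩
        have hi' : (⟨(i:ℕ) - 2 + 2, by omega⟩ : Fin (n+1)) = i := by
          apply Fin.ext; simp; omega
        rwa [hi'] at this
  · rintro ⟨h1, h2, h3, h4, h5⟩
    refine ⟨h1, h5, ?_, ?_, ?_, ?_⟩
    · intro j; exact (h2 j.succ (Fin.succ_ne_zero j)).1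
    · intro j; exact (h2 j.succ (Fin.succ_ne_zero j)).2
    · intro j; exact h3 _ (by simp)
    · intro i
      have hi := i.isLt
      exact h4 ⟨(i:ℕ)+2, by omega⟩ (by simp) (by simp; omega)

noncomputable def Xmat (n : ℕ) (c d : ℂ) (f g : Fin n → ℂ)
    (p : Fin (n-1) → ℂ) (q : Fin (n-2) → ℂ) :
    Matrix (Fin (n+1)) (Fin (n+1)) ℂ := fun i j =>
  if hi : (i:ℕ) = 0 then
    (if hj : (j:ℕ) = 0 then 0 else f ⟨(j:ℕ)-1, by have := j.isLt; omega⟩)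
  else if hj : (j:ℕ) = 0 then g ⟨(i:ℕ)-1, by have := i.isLt; omega⟩
  else if (i:ℕ) = 1 ∧ (j:ℕ) = 1 then a1v c d
  else if (i:ℕ) = n ∧ (j:ℕ) = n then c - a1v c d
  else if hp : (i:ℕ) = 1 ∧ 2 ≤ (j:ℕ) then
    p ⟨(j:ℕ)-2, by have := j.isLt; omega⟩
  else if hq : 2 ≤ (i:ℕ) ∧ (i:ℕ) ≤ n-1 ∧ (j:ℕ) = n then
    q ⟨(i:ℕ)-2, by have := i.isLt; omega⟩
  else 0

lemma diag_eq (n : ℕ) (hn : 2 ≤ n) (c d : ℂ) (f g : Fin n → ℂ)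
    (p : Fin (n-1) → ℂ) (q : Fin (n-2) → ℂ) (k : Fin (n+1)) :
    Xmat n c d f g p q k k =
      (if (k:ℕ) = 1 then a1v c d else 0) + (if (k:ℕ) = n then c - a1v c d else 0) := by
  by_cases h0 : (k:ℕ) = 0
  · simp [Xmat, h0, (show ¬ ((0:ℕ) = n) by omega)]
  · by_cases h1 : (k:ℕ) = 1
    · simp [Xmat, h1, (show ¬ ((1:ℕ) = n) by omega)]
    · by_cases hl : (k:ℕ) = n
      · simp [Xmat, hl, (show ¬ (n = 0) by omega), (show ¬ (n = 1) by omega)]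
      · simp [Xmat, h0, h1, hl]

lemma X00 (n : ℕ) (hn : 2 ≤ n) (c d : ℂ) (f g : Fin n → ℂ)
    (p : Fin (n-1) → ℂ) (q : Fin (n-2) → ℂ) :
    Xmat n c d f g p q 0 0 = 0 := by
  rw [diag_eq n hn]
  simp [(show ¬((0:ℕ) = 1) by omega), (show ¬((0:ℕ) = n) by omega)]

lemma X11 (n : ℕ) (hn : 2 ≤ n) (c d : ℂ) (f g : Fin n → ℂ)
    (p : Fin (n-1) → ℂ) (q : Fin (n-2) → ℂ) :
    Xmat n c d f g p q 1 1 = a1v c d := by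
  rw [diag_eq n hn, val_one n hn]
  simp [(show ¬((1:ℕ) = n) by omega)]

lemma Xll (n : ℕ) (hn : 2 ≤ n) (c d : ℂ) (f g : Fin n → ℂ)
    (p : Fin (n-1) → ℂ) (q : Fin (n-2) → ℂ) :
    Xmat n c d f g p q (Fin.last n) (Fin.last n) = c - a1v c d := by
  rw [diag_eq n hn]
  simp [Fin.val_last, (show ¬(n = 1) by omega)]

lemma Xtrace (n : ℕ) (hn : 2 ≤ n) (c d : ℂ) (f g : Fin n → ℂ)
    (p : Fin (n-1) → ℂ) (q : Fin (n-2) → ℂ) :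
    Matrix.trace (Xmat n c d f g p q) = c := by
  have htr : Matrix.trace (Xmat n c d f g p q) = ∑ k, Xmat n c d f g p q k k := rfl
  rw [htr]
  have hco : ∀ k : Fin (n+1), Xmat n c d f g p q k k =
      (if k = (1 : Fin (n+1)) then a1v c d else 0) +
      (if k = Fin.last n then c - a1v c d else 0) := by
    intro k
    rw [diag_eq n hn]
    congr 1
    · exact if_congr (by rw [Fin.ext_iff, val_one n hn]) rfl rfl
    · exact if_congr (by rw [Fin.ext_iff, Fin.val_last]) rfl rfl
  rw [Finset.sum_congr rfl (fun k _ => hco k), Finset.sum_add_distrib,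
    Finset.sum_ite_eq' Finset.univ (1 : Fin (n+1)) (fun _ => a1v c d),
    Finset.sum_ite_eq' Finset.univ (Fin.last n) (fun _ => c - a1v c d)]
  simp

lemma Xrow (n : ℕ) (c d : ℂ) (f g : Fin n → ℂ)
    (p : Fin (n-1) → ℂ) (q : Fin (n-2) → ℂ) (j : Fin n) :
    Xmat n c d f g p q 0 j.succ = f j := by
  simp [Xmat]

lemma Xcol (n : ℕ) (c d : ℂ) (f g : Fin n → ℂ)
    (p : Fin (n-1) → ℂ) (q : Fin (n-2) → ℂ) (j : Fin n) :
    Xmat n c d f g p q j.succ 0 = g j := by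
  simp [Xmat]

lemma Xp (n : ℕ) (hn : 2 ≤ n) (c d : ℂ) (f g : Fin n → ℂ)
    (p : Fin (n-1) → ℂ) (q : Fin (n-2) → ℂ) (k : Fin (n-1)) :
    Xmat n c d f g p q 1 ⟨(k:ℕ)+2, by have := k.isLt; omega⟩ = p k := by
  have hk := k.isLt
  simp [Xmat, (show 1 % (n+1) = 1 from Nat.mod_eq_of_lt (by omega)), (show ¬(n = 0) by omega),
    (show ¬((k:ℕ)+2 = 0) by omega),
    (show ¬((k:ℕ)+2 = 1) by omega), (show ¬((1:ℕ) = n) by omega)]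

lemma Xq (n : ℕ) (hn : 2 ≤ n) (c d : ℂ) (f g : Fin n → ℂ)
    (p : Fin (n-1) → ℂ) (q : Fin (n-2) → ℂ) (k : Fin (n-2)) :
    Xmat n c d f g p q ⟨(k:ℕ)+2, by have := k.isLt; omega⟩ (Fin.last n) = q k := by
  have hk := k.isLt
  simp [Xmat, Fin.val_last, (show ¬((k:ℕ)+2 = 0) by omega),
    (show ¬((k:ℕ)+2 = 1) by omega), (show ¬((k:ℕ)+2 = n) by omega),
    (show ¬(n = 0) by omega), (show (k:ℕ)+2 ≤ n-1 by omega)]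

lemma phi_surj (n : ℕ) (hn : 2 ≤ n) : Function.Surjective (SubmaxCProj6.Phi n) := by
  rintro ⟨c, d, f, g, p, q⟩
  refine ⟨Xmat n c d f g p q, ?_⟩
  simp only [Phi, LinearMap.coe_mk, AddHom.coe_mk]
  refine Prod.ext ?_ (Prod.ext ?_ (Prod.ext ?_ (Prod.ext ?_ (Prod.ext ?_ ?_))))
  · exact Xtrace n hn c d f g p q
  · show _ = d
    rw [X00 n hn, X11 n hn, Xll n hn]
    simp [a1v, Complex.ext_iff]
    constructor <;> ring
  · funext j; exact Xrow n c d f g p q j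
  · funext j; exact Xcol n c d f g p q j
  · funext k; exact Xp n hn c d f g p q k
  · funext k; exact Xq n hn c d f g p q k

end SubmaxCProj6

/-- the annihilator of the type II lowest weight vector (`n ≥ 2`): the real
subspace of `sl(n+1,ℂ)` of matrices with zero first row and column off the `(1,1)` entry
`a₀`, whose lower-right `n×n` block has first row zero off the diagonal and last column
zero off the diagonal, satisfying `a₀+a₁+⋯+aₙ = 0` and `2 Re(a₀-a₁) = a₁ - aₙ`, has real
dimension `2(n² - 2n + 2)`. -/
theorem submaximal_cprojective_stmt6 (n : ℕ) (hn : 2 ≤ n) :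
    ∃ S : Submodule ℝ (Matrix (Fin (n+1)) (Fin (n+1)) ℂ),
      (∀ X, X ∈ S ↔
        (Matrix.trace X = 0 ∧
         (∀ j : Fin (n+1), j ≠ 0 → X 0 j = 0 ∧ X j 0 = 0) ∧
         (∀ j : Fin (n+1), 2 ≤ (j:ℕ) → X 1 j = 0) ∧
         (∀ i : Fin (n+1), 1 ≤ (i:ℕ) → (i:ℕ) ≤ n - 1 → X i (Fin.last n) = 0) ∧
         ((2*((X 0 0).re - (X 1 1).re) : ℝ) : ℂ)
            = X 1 1 - X (Fin.last n) (Fin.last n))) ∧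
      Module.finrank ℝ S = 2*(n^2 - 2*n + 2) := by
  refine ⟨LinearMap.ker (SubmaxCProj6.Phi n), fun X => SubmaxCProj6.mem_ker_iff n hn X, ?_⟩
  have hrn := LinearMap.finrank_range_add_finrank_ker (SubmaxCProj6.Phi n)
  rw [LinearMap.range_eq_top.mpr (SubmaxCProj6.phi_surj n hn), finrank_top] at hrn
  have eM : Matrix (Fin (n+1)) (Fin (n+1)) ℂ ≃ₗ[ℝ] (Fin (n+1) → Fin (n+1) → ℂ) :=
    LinearEquiv.refl ℝ _
  have hM : Module.finrank ℝ (Matrix (Fin (n+1)) (Fin (n+1)) ℂ) = 2*n^2+4*n+2 := by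
    rw [eM.finrank_eq]
    simp [Module.finrank_pi_fintype, Complex.finrank_real_complex, Finset.sum_const,
      Fintype.card_fin]
    ring
  have hW : Module.finrank ℝ
      (ℂ × ℂ × (Fin n → ℂ) × (Fin n → ℂ) × (Fin (n-1) → ℂ) × (Fin (n-2) → ℂ)) = 8*n-2 := by
    simp [Module.finrank_prod, Module.finrank_pi_fintype, Complex.finrank_real_complex,
      Finset.sum_const, Fintype.card_fin]
    omega
  rw [hM, hW] at hrn
  have h2n : 2*n ≤ n^2 := by nlinarith
  generalize n^2 = s at h2n hrn ⊢
  omega
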